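/- Let k₀ > 0 be the constant from the nonlinear interpolation inequality for W and let 0 < k < k₀. Let I ⊂ ℝ be an open bounded interval, (ε_j) a sequence of positive numbers tending to 0, and (u_j) ⊂ W^{2,2}(I) a sequence with sup_j F^k_{ε_j}(u_j, I) < +∞. Then there exist a subsequence (u_{j_m}) and a function u ∈ BV(I; {−1, 1}) such that u_{j_m} → u in L¹(I). -/

import Mathlib

/-!
Cutting `(α, β)` into `⌈(β - α)/ε⌉` intervals of length `ℓ ≈ ε` and applying the interpolation
inequality on each of them gives `k ε ∫ u'² ≤ θ ∫ W(u)/ε + (k/k₀) ε³ ∫ u''²` with `θ < 1` once `ε`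
is small, so `F^k_ε` controls the Modica–Mortola energy `∫ (W(u)/ε + k ε u'²)`. For a profile `Φ`
with `Φ' ≲ √W` and `Φ(±1) = ±1`, this bounds the variation of `Φ ∘ u_j` (`√W |u'| ≤ W/ε + ε u'²`
up to constants), so by Helly's theorem a subsequence of `Φ ∘ u_j` converges a.e. and in `L¹` to
some `v ∈ BV`. Since `∫ W(u_j) → 0` and `W` grows quadratically away from `±1`, the distance of
`u_j` to `{±1}` tends to `0` in `L¹`; as `Φ` fixes `±1` and is Lipschitz, this gives `u_j → v` in
`L¹` and `v ∈ {±1}` a.e.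
-/

open MeasureTheory intervalIntegral Filter

/-- `u ∈ W^{2,2}(a,b)` with first derivative `u'` and second derivative `u''`. -/
def W22On (u u' u'' : ℝ → ℝ) (a b : ℝ) : Prop :=
  (∀ x ∈ Set.Icc a b, HasDerivWithinAt u (u' x) (Set.Icc a b) x) ∧
  ContinuousOn u' (Set.Icc a b) ∧
  MeasureTheory.IntegrableOn u'' (Set.Icc a b) ∧
  MeasureTheory.IntegrableOn (fun x => (u'' x) ^ 2) (Set.Icc a b) ∧
  (∀ x ∈ Set.Icc a b, u' x = u' a + ∫ t in a..x, u'' t)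

open Set Topology
open scoped NNReal

def InterpolationInequality (W : ℝ → ℝ) (k₀ : ℝ) : Prop :=
  ∀ a b : ℝ, a < b → ∀ u u' u'' : ℝ → ℝ, W22On u u' u'' a b →
    k₀ * ∫ x in a..b, (u' x) ^ 2 ≤
      ((b - a) ^ 2)⁻¹ * (∫ x in a..b, W (u x)) + (b - a) ^ 2 * ∫ x in a..b, (u'' x) ^ 2

/-- The functional `F^k_ε(u, (a, b))`. -/
noncomputable def energy (W : ℝ → ℝ) (k e : ℝ) (u u' u'' : ℝ → ℝ) (a b : ℝ) : ℝ :=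
  ∫ x in a..b, (W (u x) / e - k * e * (u' x) ^ 2 + e ^ 3 * (u'' x) ^ 2)

noncomputable def modicaMortolaEnergy (W : ℝ → ℝ) (k e : ℝ) (u u' : ℝ → ℝ) (a b : ℝ) : ℝ :=
  ∫ x in a..b, (W (u x) / e + k * e * (u' x) ^ 2)

namespace W22On

variable {u u' u'' : ℝ → ℝ} {a b : ℝ}

theorem continuousOn (hu : W22On u u' u'' a b) : ContinuousOn u (Icc a b) :=
  fun x hx => (hu.1 x hx).continuousWithinAt

theorem mono (hu : W22On u u' u'' a b) {a' b' : ℝ} (ha : a ≤ a') (hb : b' ≤ b) :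
    W22On u u' u'' a' b' := by
  obtain ⟨hderiv, hcont, hint, hint2, hftc⟩ := hu
  have hsub : Icc a' b' ⊆ Icc a b := Icc_subset_Icc ha hb
  refine ⟨fun x hx => (hderiv x (hsub hx)).mono hsub, hcont.mono hsub, hint.mono_set hsub,
    hint2.mono_set hsub, fun x hx => ?_⟩
  have hx' := hsub hx
  have ha' : a' ∈ Icc a b := ⟨ha, hx.1.trans hx'.2⟩
  have hleft : a ∈ Icc a b := ⟨le_rfl, ha'.1.trans ha'.2⟩
  rw [hftc x hx', hftc a' ha', add_assoc,
    integral_add_adjacent_intervals (hint.mono_set (uIcc_subset_Icc hleft ha')).intervalIntegrable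
      (hint.mono_set (uIcc_subset_Icc ha' hx')).intervalIntegrable]

theorem intervalIntegrable_comp {W : ℝ → ℝ} (hW : Continuous W) (hu : W22On u u' u'' a b)
    (hab : a ≤ b) : IntervalIntegrable (fun x => W (u x)) volume a b :=
  (hW.comp_continuousOn hu.continuousOn).intervalIntegrable_of_Icc hab

theorem intervalIntegrable_deriv_sq (hu : W22On u u' u'' a b) (hab : a ≤ b) :
    IntervalIntegrable (fun x => (u' x) ^ 2) volume a b :=
  (hu.2.1.pow 2).intervalIntegrable_of_Icc hab

theorem intervalIntegrable_deriv2_sq (hu : W22On u u' u'' a b) (hab : a ≤ b) :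
    IntervalIntegrable (fun x => (u'' x) ^ 2) volume a b :=
  (hu.2.2.2.1.mono_set (uIcc_subset_Icc ⟨le_rfl, hab⟩ ⟨hab, le_rfl⟩)).intervalIntegrable

end W22On

section Energy

variable {W : ℝ → ℝ} {k e a b : ℝ} {u u' u'' : ℝ → ℝ}

theorem energy_eq (hW : Continuous W) (hu : W22On u u' u'' a b) (hab : a ≤ b) :
    energy W k e u u' u'' a b = (∫ x in a..b, W (u x)) / e - k * e * (∫ x in a..b, (u' x) ^ 2) +
      e ^ 3 * ∫ x in a..b, (u'' x) ^ 2 := by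
  have hP := (hu.intervalIntegrable_comp hW hab).div_const e
  have hT := (hu.intervalIntegrable_deriv_sq hab).const_mul (k * e)
  rw [energy, integral_add (hP.sub hT) ((hu.intervalIntegrable_deriv2_sq hab).const_mul _),
    integral_sub hP hT, intervalIntegral.integral_div, intervalIntegral.integral_const_mul,
    intervalIntegral.integral_const_mul]

theorem modicaMortolaEnergy_eq (hW : Continuous W) (hu : W22On u u' u'' a b) (hab : a ≤ b) :
    modicaMortolaEnergy W k e u u' a b =
      (∫ x in a..b, W (u x)) / e + k * e * ∫ x in a..b, (u' x) ^ 2 := by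
  rw [modicaMortolaEnergy, integral_add ((hu.intervalIntegrable_comp hW hab).div_const e)
    ((hu.intervalIntegrable_deriv_sq hab).const_mul _), intervalIntegral.integral_div,
    intervalIntegral.integral_const_mul]

theorem integral_comp_le_mul_modicaMortolaEnergy (hW : Continuous W) (hk : 0 ≤ k) (he : 0 < e)
    (hu : W22On u u' u'' a b) (hab : a ≤ b) :
    ∫ x in a..b, W (u x) ≤ e * modicaMortolaEnergy W k e u u' a b := by
  have hT : 0 ≤ k * e * ∫ x in a..b, (u' x) ^ 2 :=
    mul_nonneg (mul_nonneg hk he.le) (integral_nonneg hab fun x _ => sq_nonneg _)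
  rw [modicaMortolaEnergy_eq hW hu hab, mul_add, mul_div_cancel₀ _ he.ne']
  linarith [mul_nonneg he.le hT]

end Energy

theorem uniform_partition_mem {a b : ℝ} (hab : a ≤ b) {n i : ℕ} (hi : i ≤ n) :
    a + i * ((b - a) / n) ∈ Icc a b := by
  rcases Nat.eq_zero_or_pos n with rfl | hn
  · simp [Nat.le_zero.1 hi, hab]
  have hℓ : 0 ≤ (b - a) / n := div_nonneg (sub_nonneg.2 hab) n.cast_nonneg
  refine ⟨le_add_of_nonneg_right (mul_nonneg i.cast_nonneg hℓ), ?_⟩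
  have : (i : ℝ) * ((b - a) / n) ≤ n * ((b - a) / n) := by gcongr
  rw [mul_div_cancel₀ _ (Nat.cast_pos.2 hn).ne'] at this
  linarith

theorem sum_integral_uniform_partition {f : ℝ → ℝ} {a b : ℝ} (hab : a ≤ b) {n : ℕ} (hn : 0 < n)
    (hf : IntervalIntegrable f volume a b) :
    ∑ i ∈ Finset.range n, ∫ x in a + i * ((b - a) / n)..a + (i + 1) * ((b - a) / n), f x =
      ∫ x in a..b, f x := by
  have := sum_integral_adjacent_intervals (a := fun i : ℕ => a + i * ((b - a) / n)) (μ := volume)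
    (f := f) fun i hi => hf.mono_set (by
      rw [uIcc_of_le hab]
      exact uIcc_subset_Icc (uniform_partition_mem hab hi.le) (uniform_partition_mem hab hi))
  rw [Nat.cast_zero, zero_mul, add_zero, mul_div_cancel₀ _ (Nat.cast_pos.2 hn).ne',
    add_sub_cancel] at this
  simpa only [Nat.cast_succ] using this

theorem InterpolationInequality.le_uniform_partition {W : ℝ → ℝ} {k₀ a b : ℝ}
    {u u' u'' : ℝ → ℝ} (hk₀ : InterpolationInequality W k₀) (hW : Continuous W)
    (hu : W22On u u' u'' a b) (hab : a < b) {n : ℕ} (hn : 0 < n) :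
    k₀ * ∫ x in a..b, (u' x) ^ 2 ≤ (((b - a) / n) ^ 2)⁻¹ * (∫ x in a..b, W (u x)) +
      ((b - a) / n) ^ 2 * ∫ x in a..b, (u'' x) ^ 2 := by
  set ℓ := (b - a) / n
  have hpiece : ∀ i ∈ Finset.range n,
      k₀ * ∫ x in a + i * ℓ..a + (i + 1) * ℓ, (u' x) ^ 2 ≤
        (ℓ ^ 2)⁻¹ * (∫ x in a + i * ℓ..a + (i + 1) * ℓ, W (u x)) +
          ℓ ^ 2 * ∫ x in a + i * ℓ..a + (i + 1) * ℓ, (u'' x) ^ 2 := by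
    intro i hi
    have hi := Finset.mem_range.1 hi
    have hℓ : 0 < ℓ := div_pos (sub_pos.2 hab) (Nat.cast_pos.2 hn)
    have := hk₀ (a + i * ℓ) (a + (i + 1) * ℓ) (by linarith) u u' u''
      (hu.mono (uniform_partition_mem hab.le hi.le).1
        (by simpa only [Nat.cast_succ] using (uniform_partition_mem hab.le hi).2))
    rwa [show a + (i + 1) * ℓ - (a + i * ℓ) = ℓ by ring] at this
  have hsum := Finset.sum_le_sum hpiece
  rwa [← Finset.mul_sum, Finset.sum_add_distrib, ← Finset.mul_sum, ← Finset.mul_sum,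
    sum_integral_uniform_partition hab.le hn (hu.intervalIntegrable_deriv_sq hab.le),
    sum_integral_uniform_partition hab.le hn (hu.intervalIntegrable_comp hW hab.le),
    sum_integral_uniform_partition hab.le hn (hu.intervalIntegrable_deriv2_sq hab.le)] at hsum

theorem exists_uniform_partition_length {L e : ℝ} (hL : 0 < L) (he : 0 < e) :
    ∃ n : ℕ, 0 < n ∧ L / n ≤ e ∧ e ≤ L / n * (1 + e / L) := by
  have hn : 0 < ⌈L / e⌉₊ := Nat.ceil_pos.2 (div_pos hL he)
  have hn' : (0 : ℝ) < ⌈L / e⌉₊ := Nat.cast_pos.2 hn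
  refine ⟨⌈L / e⌉₊, hn, ?_, ?_⟩
  · rw [div_le_iff₀ hn', ← div_le_iff₀' he]
    exact Nat.le_ceil _
  · have := Nat.ceil_lt_add_one (div_pos hL he).le
    rw [div_mul_eq_mul_div, le_div_iff₀ hn', mul_add, mul_one, mul_div_cancel₀ _ hL.ne']
    have := mul_lt_mul_of_pos_right this he
    rw [add_mul, div_mul_cancel₀ _ he.ne', one_mul] at this
    linarith

section Coercivity

variable {W : ℝ → ℝ} {k₀ k e a b : ℝ} {u u' u'' : ℝ → ℝ}

theorem energy_coercive (hW0 : ∀ s, 0 ≤ W s) (hW : Continuous W)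
    (hk₀ : InterpolationInequality W k₀) (hk : 0 < k) (hkk₀ : k < k₀) (hab : a < b) (he : 0 < e)
    (hsmall : k / k₀ * (1 + e / (b - a)) ^ 2 ≤ (1 + k / k₀) / 2) (hu : W22On u u' u'' a b) :
    (1 - k / k₀) * modicaMortolaEnergy W k e u u' a b ≤ 4 * energy W k e u u' u'' a b := by
  obtain ⟨n, hn, hℓe, heℓ⟩ := exists_uniform_partition_length (sub_pos.2 hab) he
  have hinterp := hk₀.le_uniform_partition hW hu hab hn
  rw [energy_eq hW hu hab.le, modicaMortolaEnergy_eq hW hu hab.le]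
  set ℓ := (b - a) / n
  set P := ∫ x in a..b, W (u x)
  set T := ∫ x in a..b, (u' x) ^ 2
  set Q := ∫ x in a..b, (u'' x) ^ 2
  have hℓ : 0 < ℓ := div_pos (sub_pos.2 hab) (Nat.cast_pos.2 hn)
  have hP : 0 ≤ P / e := div_nonneg (integral_nonneg hab.le fun x _ => hW0 _) he.le
  have hQ₀ : 0 ≤ Q := integral_nonneg hab.le fun x _ => sq_nonneg _
  have hQ : 0 ≤ e ^ 3 * Q := by positivity
  have hk₀pos : 0 < k₀ := hk.trans hkk₀
  set r := k / k₀
  have hr : 0 < r := div_pos hk hk₀pos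
  have hr1 : r < 1 := (div_lt_one hk₀pos).2 hkk₀
  have hratio : r * e ^ 2 ≤ (1 + r) / 2 * ℓ ^ 2 :=
    calc r * e ^ 2 ≤ r * (ℓ * (1 + e / (b - a))) ^ 2 := by gcongr
      _ = r * (1 + e / (b - a)) ^ 2 * ℓ ^ 2 := by ring
      _ ≤ (1 + r) / 2 * ℓ ^ 2 := by gcongr
  have key : k * e * T ≤ (1 + r) / 2 * (P / e) + r * (e ^ 3 * Q) :=
    calc k * e * T = r * e * (k₀ * T) := by simp only [r]; field_simp
      _ ≤ r * e * ((ℓ ^ 2)⁻¹ * P + ℓ ^ 2 * Q) := by gcongr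
      _ = r * e ^ 2 / ℓ ^ 2 * (P / e) + r * e * ℓ ^ 2 * Q := by field_simp
      _ ≤ (1 + r) / 2 * (P / e) + r * e * e ^ 2 * Q := by
        have : r * e ^ 2 / ℓ ^ 2 ≤ (1 + r) / 2 := by rwa [div_le_iff₀ (by positivity)]
        gcongr
      _ = (1 + r) / 2 * (P / e) + r * (e ^ 3 * Q) := by ring
  -- with `X = P/e`, `Y = keT`, `Z = e³Q`: `4(X - Y + Z) - (1 - r)(X + Y)` is
  -- `(5 - r)((1 + r)/2 · X + rZ - Y) + (1 - r)²/2 · X + (1 - r)(4 - r) · Z`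
  nlinarith [mul_le_mul_of_nonneg_left key (by linarith : (0 : ℝ) ≤ 5 - r),
    mul_nonneg (sq_nonneg (1 - r)) hP, mul_nonneg (mul_nonneg (by linarith : (0 : ℝ) ≤ 1 - r)
      (by linarith : (0 : ℝ) ≤ 4 - r)) hQ]

end Coercivity

theorem eventually_energy_coercive {W : ℝ → ℝ} {k₀ k a b : ℝ} (hW0 : ∀ s, 0 ≤ W s)
    (hW : Continuous W) (hk₀ : InterpolationInequality W k₀) (hk : 0 < k) (hkk₀ : k < k₀)
    (hab : a < b) :
    ∀ᶠ e in 𝓝[>] 0, ∀ u u' u'' : ℝ → ℝ, W22On u u' u'' a b →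
      (1 - k / k₀) * modicaMortolaEnergy W k e u u' a b ≤ 4 * energy W k e u u' u'' a b := by
  have hr : k / k₀ < (1 + k / k₀) / 2 := by
    linarith [(div_lt_one (hk.trans hkk₀)).2 hkk₀]
  have hlim : Tendsto (fun e => k / k₀ * (1 + e / (b - a)) ^ 2) (𝓝 0) (𝓝 (k / k₀)) := by
    simpa using ((((continuous_const (y := (1 : ℝ))).add
      (continuous_id.div_const (b - a))).pow 2).const_mul (k / k₀)).tendsto 0
  filter_upwards [nhdsWithin_le_nhds (hlim.eventually (eventually_le_nhds hr)),
    self_mem_nhdsWithin] with e hsmall he u u' u'' hu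
  exact energy_coercive hW0 hW hk₀ hk hkk₀ hab he hsmall hu

section Variation

variable {α : Type*} [LinearOrder α] {E : Type*} [SeminormedAddCommGroup E]

theorem eVariationOn_sub_le (f g : α → E) (s : Set α) :
    eVariationOn (f - g) s ≤ eVariationOn f s + eVariationOn g s := by
  refine iSup_le fun ⟨n, u, hu, us⟩ => ?_
  calc ∑ i ∈ Finset.range n, edist ((f - g) (u (i + 1))) ((f - g) (u i))
      ≤ ∑ i ∈ Finset.range n,
          (edist (f (u (i + 1))) (f (u i)) + edist (g (u (i + 1))) (g (u i))) := by
        gcongr with i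
        simp only [Pi.sub_apply, edist_eq_enorm_sub]
        exact (enorm_sub_le).trans_eq' (by abel_nf)
    _ ≤ eVariationOn f s + eVariationOn g s := by
        rw [Finset.sum_add_distrib]
        exact add_le_add (eVariationOn.sum_le (f := f) hu us) (eVariationOn.sum_le (f := g) hu us)

theorem BoundedVariationOn.sub {f g : α → E} {s : Set α} (hf : BoundedVariationOn f s)
    (hg : BoundedVariationOn g s) : BoundedVariationOn (f - g) s :=
  ((eVariationOn_sub_le f g s).trans_lt (ENNReal.add_lt_top.2 ⟨hf.lt_top, hg.lt_top⟩)).ne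

end Variation

theorem integral_eq_sub_of_hasDerivWithinAt_Icc {f f' : ℝ → ℝ} {a b x y : ℝ}
    (hf : ∀ t ∈ Icc a b, HasDerivWithinAt f (f' t) (Icc a b) t) (hf' : ContinuousOn f' (Icc a b))
    (hx : a ≤ x) (hxy : x ≤ y) (hy : y ≤ b) :
    ∫ t in x..y, f' t = f y - f x := by
  have hsub : Icc x y ⊆ Icc a b := Icc_subset_Icc hx hy
  refine integral_eq_sub_of_hasDeriv_right_of_le hxy
    (fun t ht => (hf t (hsub ht)).continuousWithinAt.mono hsub) (fun t ht => ?_)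
    ((hf'.mono hsub).intervalIntegrable_of_Icc hxy)
  have ht : t ∈ Ioo a b := ⟨hx.trans_lt ht.1, ht.2.trans_le hy⟩
  exact ((hf t (Ioo_subset_Icc_self ht)).hasDerivAt (Icc_mem_nhds ht.1 ht.2)).hasDerivWithinAt

theorem eVariationOn_le_integral_abs_of_hasDerivWithinAt {f f' : ℝ → ℝ} {a b : ℝ} (hab : a ≤ b)
    (hf : ∀ t ∈ Icc a b, HasDerivWithinAt f (f' t) (Icc a b) t) (hf' : ContinuousOn f' (Icc a b)) :
    eVariationOn f (Icc a b) ≤ ENNReal.ofReal (∫ t in a..b, |f' t|) := by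
  have hint : ∀ x y, a ≤ x → x ≤ y → y ≤ b → IntervalIntegrable (fun t => |f' t|) volume x y :=
    fun x y hx hxy hy => (hf'.abs.mono (Icc_subset_Icc hx hy)).intervalIntegrable_of_Icc hxy
  refine iSup_le fun ⟨n, x, hx, xs⟩ => ?_
  have step : ∀ i, edist (f (x (i + 1))) (f (x i)) ≤
      ENNReal.ofReal (∫ t in x i..x (i + 1), |f' t|) := by
    intro i
    rw [edist_dist, Real.dist_eq, ← integral_eq_sub_of_hasDerivWithinAt_Icc hf hf' (xs i).1
      (hx i.le_succ) (xs (i + 1)).2]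
    exact ENNReal.ofReal_le_ofReal (abs_integral_le_integral_abs (hx i.le_succ))
  calc ∑ i ∈ Finset.range n, edist (f (x (i + 1))) (f (x i))
      ≤ ∑ i ∈ Finset.range n, ENNReal.ofReal (∫ t in x i..x (i + 1), |f' t|) :=
        Finset.sum_le_sum fun i _ => step i
    _ = ENNReal.ofReal (∫ t in x 0..x n, |f' t|) := by
        rw [← ENNReal.ofReal_sum_of_nonneg fun i _ =>
          integral_nonneg (hx i.le_succ) fun t _ => abs_nonneg _,
          sum_integral_adjacent_intervals fun i _ => hint _ _ (xs i).1 (hx i.le_succ) (xs _).2]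
    _ ≤ ENNReal.ofReal (∫ t in a..b, |f' t|) :=
        ENNReal.ofReal_le_ofReal <| integral_mono_interval (xs 0).1 (hx (Nat.zero_le n)) (xs n).2
          (.of_forall fun t => abs_nonneg _) (hint a b le_rfl hab le_rfl)

theorem two_mul_sqrt_mul_le {k e w v : ℝ} (hk : 0 ≤ k) (he : 0 < e) (hw : 0 ≤ w) :
    2 * √k * (√w * |v|) ≤ w / e + k * e * v ^ 2 := by
  have hsq : (√w - √k * e * |v|) ^ 2 = w - 2 * √k * (√w * |v|) * e + k * e * v ^ 2 * e := by
    rw [sub_sq, mul_pow, mul_pow, Real.sq_sqrt hw, Real.sq_sqrt hk, sq_abs]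
    ring
  rw [div_add' _ _ _ he.ne', le_div_iff₀ he]
  linarith [sq_nonneg (√w - √k * e * |v|)]

theorem eVariationOn_comp_le_modicaMortolaEnergy {W Φ φ : ℝ → ℝ} {L : ℝ≥0} {k e a b : ℝ}
    {u u' u'' : ℝ → ℝ} (hW0 : ∀ s, 0 ≤ W s) (hW : Continuous W)
    (hΦ : ∀ s, HasDerivAt Φ (φ s) s) (hφ : Continuous φ) (hφW : ∀ s, |φ s| ≤ L * √(W s))
    (hk : 0 < k) (he : 0 < e) (hab : a ≤ b) (hu : W22On u u' u'' a b) :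
    eVariationOn (Φ ∘ u) (Icc a b) ≤
      ENNReal.ofReal (L / (2 * √k) * modicaMortolaEnergy W k e u u' a b) := by
  have hcont : ContinuousOn (fun t => φ (u t) * u' t) (Icc a b) :=
    (hφ.comp_continuousOn hu.continuousOn).mul hu.2.1
  refine (eVariationOn_le_integral_abs_of_hasDerivWithinAt hab
    (fun t ht => (hΦ (u t)).comp_hasDerivWithinAt t (hu.1 t ht)) hcont).trans
    (ENNReal.ofReal_le_ofReal ?_)
  rw [modicaMortolaEnergy, ← intervalIntegral.integral_const_mul]
  refine integral_mono_on hab (hcont.abs.intervalIntegrable_of_Icc hab)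
    ((((hu.intervalIntegrable_comp hW hab).div_const e).add
      ((hu.intervalIntegrable_deriv_sq hab).const_mul _)).const_mul _) fun t _ => ?_
  have hsk : 0 < √k := Real.sqrt_pos.2 hk
  calc |φ (u t) * u' t| = |φ (u t)| * |u' t| := abs_mul _ _
    _ ≤ L * √(W (u t)) * |u' t| := by gcongr; exact hφW _
    _ = L / (2 * √k) * (2 * √k * (√(W (u t)) * |u' t|)) := by field_simp
    _ ≤ L / (2 * √k) * (W (u t) / e + k * e * u' t ^ 2) := by
      gcongr; exact two_mul_sqrt_mul_le hk.le he (hW0 _)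

theorem exists_subseq_forall_tendsto_of_abs_le {ι : Type*} [Countable ι] {K : ℝ}
    (f : ℕ → ι → ℝ) (hf : ∀ j i, |f j i| ≤ K) :
    ∃ ψ : ℕ → ℕ, StrictMono ψ ∧ ∃ L : ι → ℝ, ∀ i, Tendsto (fun m => f (ψ m) i) atTop (𝓝 (L i)) := by
  obtain ⟨L, -, ψ, hψ, hL⟩ := (isCompact_univ_pi fun _ => isCompact_Icc (a := -K) (b := K))
    |>.tendsto_subseq fun j => mem_univ_pi.2 fun i => abs_le.1 (hf j i)
  exact ⟨ψ, hψ, L, tendsto_pi_nhds.1 hL⟩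

theorem tendsto_of_monotoneOn_of_tendsto_rat {p : ℕ → ℝ → ℝ} {P : ℝ → ℝ} {a b x : ℝ}
    (hp : ∀ m, MonotoneOn (p m) (Ioo a b))
    (hrat : ∀ q : ℚ, (q : ℝ) ∈ Ioo a b → Tendsto (fun m => p m q) atTop (𝓝 (P q)))
    (hx : x ∈ Ioo a b) (hPx : ContinuousAt P x) :
    Tendsto (fun m => p m x) atTop (𝓝 (P x)) := by
  refine tendsto_order.2 ⟨fun y hy => ?_, fun y hy => ?_⟩
  · obtain ⟨l, hlx, hl⟩ := exists_Ioc_subset_of_mem_nhds (hPx.eventually (lt_mem_nhds hy))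
      ⟨a, hx.1⟩
    obtain ⟨q, hq⟩ := exists_rat_btwn (max_lt hlx hx.1)
    have hqI : (q : ℝ) ∈ Ioo a b := ⟨(le_max_right _ _).trans_lt hq.1, hq.2.trans hx.2⟩
    filter_upwards [(hrat q hqI).eventually (lt_mem_nhds (hl ⟨(le_max_left _ _).trans_lt hq.1,
      hq.2.le⟩))] with m hm
    exact hm.trans_le (hp m hqI hx hq.2.le)
  · obtain ⟨u, hxu, hu⟩ := exists_Ico_subset_of_mem_nhds (hPx.eventually (gt_mem_nhds hy))
      ⟨b, hx.2⟩
    obtain ⟨q, hq⟩ := exists_rat_btwn (lt_min hxu hx.2)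
    have hqI : (q : ℝ) ∈ Ioo a b := ⟨hx.1.trans hq.1, hq.2.trans_le (min_le_right _ _)⟩
    filter_upwards [(hrat q hqI).eventually (gt_mem_nhds (hu ⟨hq.1.le,
      hq.2.trans_le (min_le_left _ _)⟩))] with m hm
    exact (hp m hx hqI hq.1.le).trans_lt hm

theorem exists_subseq_ae_tendsto_of_monotoneOn {a b K : ℝ} (p : ℕ → ℝ → ℝ)
    (hp : ∀ j, MonotoneOn (p j) (Ioo a b)) (hK : ∀ j, ∀ x ∈ Ioo a b, |p j x| ≤ K) :
    ∃ ψ : ℕ → ℕ, StrictMono ψ ∧ ∃ P : ℝ → ℝ, MonotoneOn P (Ioo a b) ∧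
      (∀ x ∈ Ioo a b, |P x| ≤ K) ∧
      ∀ᵐ x ∂(volume.restrict (Ioo a b)), Tendsto (fun m => p (ψ m) x) atTop (𝓝 (P x)) := by
  obtain ⟨ψ, hψ, L, hL⟩ := exists_subseq_forall_tendsto_of_abs_le
    (fun j (q : {q : ℚ // (q : ℝ) ∈ Ioo a b}) => p j q) fun j q => hK j q q.2
  set P : ℝ → ℝ := fun x => limsup (fun m => p (ψ m) x) atTop
  have hle : ∀ x ∈ Ioo a b, ∀ m, p (ψ m) x ≤ K := fun x hx m => (abs_le.1 (hK _ x hx)).2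
  have hge : ∀ x ∈ Ioo a b, ∀ m, -K ≤ p (ψ m) x := fun x hx m => (abs_le.1 (hK _ x hx)).1
  have hmono : MonotoneOn P (Ioo a b) := fun x hx y hy hxy =>
    limsup_le_limsup (.of_forall fun m => hp _ hx hy hxy) (isCoboundedUnder_le_of_le _ (hge x hx))
      (isBoundedUnder_of ⟨K, hle y hy⟩)
  have hrat : ∀ q : ℚ, (q : ℝ) ∈ Ioo a b → Tendsto (fun m => p (ψ m) q) atTop (𝓝 (P q)) :=
    fun q hq => by simpa only [P, (hL ⟨q, hq⟩).limsup_eq] using hL ⟨q, hq⟩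
  refine ⟨ψ, hψ, P, hmono, fun x hx => abs_le.2 ⟨?_, ?_⟩, ?_⟩
  · exact le_limsup_of_frequently_le (.of_forall (hge x hx)) (isBoundedUnder_of ⟨K, hle x hx⟩)
  · exact limsup_le_of_le (isCoboundedUnder_le_of_le _ (hge x hx)) (.of_forall (hle x hx))
  · have hnull := hmono.countable_not_continuousWithinAt.measure_zero volume
    filter_upwards [ae_restrict_mem measurableSet_Ioo,
      ae_restrict_of_ae (measure_eq_zero_iff_ae_notMem.1 hnull)] with x hx hxc
    have hPx : ContinuousAt P x := by
      by_contra h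
      exact hxc ⟨hx, fun h' => h (h'.continuousAt (Ioo_mem_nhds hx.1 hx.2))⟩
    exact tendsto_of_monotoneOn_of_tendsto_rat (fun m => hp (ψ m)) hrat hx hPx

theorem exists_subseq_ae_tendsto_of_eVariationOn_le {a b K : ℝ} {V : ℝ≥0} (hab : a < b)
    (f : ℕ → ℝ → ℝ) (hV : ∀ j, eVariationOn (f j) (Ioo a b) ≤ V)
    (hK : ∀ j, ∀ x ∈ Ioo a b, |f j x| ≤ K) :
    ∃ ψ : ℕ → ℕ, StrictMono ψ ∧ ∃ w : ℝ → ℝ, BoundedVariationOn w (Ioo a b) ∧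
      ∀ᵐ x ∂(volume.restrict (Ioo a b)), Tendsto (fun m => f (ψ m) x) atTop (𝓝 (w x)) := by
  have hmid : (a + b) / 2 ∈ Ioo a b := ⟨by linarith, by linarith⟩
  have hBV : ∀ j, LocallyBoundedVariationOn (f j) (Ioo a b) := fun j =>
    BoundedVariationOn.locallyBoundedVariationOn (ne_top_of_le_ne_top ENNReal.coe_ne_top (hV j))
  -- Jordan decomposition `f j = p j - (p j - f j)` into bounded monotone functions
  set p : ℕ → ℝ → ℝ := fun j => variationOnFromTo (f j) (Ioo a b) ((a + b) / 2)
  have hpV : ∀ j x, |p j x| ≤ V := fun j x =>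
    (variationOnFromTo.abs_le_eVariationOn (ne_top_of_le_ne_top ENNReal.coe_ne_top (hV j))).trans
      (ENNReal.toReal_le_coe_of_le_coe (hV j))
  obtain ⟨ψ₁, hψ₁, P, hPmono, hPV, hP⟩ := exists_subseq_ae_tendsto_of_monotoneOn p
    (fun j => variationOnFromTo.monotoneOn (hBV j) hmid) fun j x _ => hpV j x
  obtain ⟨ψ₂, hψ₂, Q, hQmono, hQVK, hQ⟩ := exists_subseq_ae_tendsto_of_monotoneOn
    (fun m => p (ψ₁ m) - f (ψ₁ m)) (fun m => variationOnFromTo.sub_self_monotoneOn (hBV _) hmid)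
    fun m x hx => (abs_sub _ _).trans (add_le_add (hpV _ x) (hK _ x hx))
  refine ⟨ψ₁ ∘ ψ₂, hψ₁.comp hψ₂, P - Q,
    (hPmono.boundedVariationOn hPV).sub (hQmono.boundedVariationOn hQVK), ?_⟩
  filter_upwards [hP, hQ] with x hPx hQx
  simpa using (hPx.comp hψ₂.tendsto_atTop).sub hQx

section Integrals

variable {α : Type*} [MeasurableSpace α] {μ : Measure α}

theorem ae_abs_le_of_ae_tendsto {f : ℕ → α → ℝ} {g : α → ℝ} {K : ℝ}
    (hK : ∀ n, ∀ᵐ x ∂μ, |f n x| ≤ K) (hfg : ∀ᵐ x ∂μ, Tendsto (fun n => f n x) atTop (𝓝 (g x))) :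
    ∀ᵐ x ∂μ, |g x| ≤ K := by
  filter_upwards [ae_all_iff.2 hK, hfg] with x hx hlim
  exact le_of_tendsto' hlim.abs hx

variable [IsFiniteMeasure μ]

theorem tendsto_integral_abs_sub_of_ae_tendsto {f : ℕ → α → ℝ} {g : α → ℝ} {K : ℝ}
    (hf : ∀ n, AEStronglyMeasurable (f n) μ) (hK : ∀ n, ∀ᵐ x ∂μ, |f n x| ≤ K)
    (hfg : ∀ᵐ x ∂μ, Tendsto (fun n => f n x) atTop (𝓝 (g x))) :
    Tendsto (fun n => ∫ x, |f n x - g x| ∂μ) atTop (𝓝 0) := by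
  have hg : AEStronglyMeasurable g μ := aestronglyMeasurable_of_tendsto_ae atTop hf hfg
  have hgK := ae_abs_le_of_ae_tendsto hK hfg
  have hbound : ∀ n, ∀ᵐ x ∂μ, ‖|f n x - g x|‖ ≤ K + K := fun n => by
    filter_upwards [hK n, hgK] with x h₁ h₂
    simpa only [Real.norm_eq_abs, abs_abs] using (abs_sub _ _).trans (add_le_add h₁ h₂)
  have := tendsto_integral_of_dominated_convergence (fun _ => K + K)
    (fun n => ((hf n).sub hg).norm) (integrable_const _) hbound
    (by filter_upwards [hfg] with x hx; simpa using (hx.sub_const (g x)).abs)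
  rwa [integral_zero] at this

theorem abs_le_add_sq_div {d δ : ℝ} (hδ : 0 < δ) : |d| ≤ δ + d ^ 2 / δ := by
  rw [← sub_nonneg, show δ + d ^ 2 / δ - |d| = (δ ^ 2 + d ^ 2 - δ * |d|) / δ by field_simp]
  exact div_nonneg (by nlinarith [sq_nonneg (|d| - δ), sq_abs d, abs_nonneg d]) hδ.le

theorem tendsto_integral_of_tendsto_integral_sq {d : ℕ → α → ℝ} (hd : ∀ n, Integrable (d n) μ)
    (hd2 : ∀ n, Integrable (fun x => d n x ^ 2) μ)
    (h : Tendsto (fun n => ∫ x, d n x ^ 2 ∂μ) atTop (𝓝 0)) :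
    Tendsto (fun n => ∫ x, d n x ∂μ) atTop (𝓝 0) := by
  have key : ∀ δ > 0, ∀ n, |∫ x, d n x ∂μ| ≤ δ * μ.real univ + (∫ x, d n x ^ 2 ∂μ) / δ := by
    intro δ hδ n
    calc |∫ x, d n x ∂μ| ≤ ∫ x, |d n x| ∂μ := abs_integral_le_integral_abs
      _ ≤ ∫ x, (δ + d n x ^ 2 / δ) ∂μ :=
        integral_mono (hd n).abs ((integrable_const δ).add ((hd2 n).div_const δ)) fun x =>
          abs_le_add_sq_div hδ
      _ = δ * μ.real univ + (∫ x, d n x ^ 2 ∂μ) / δ := by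
        rw [integral_add (integrable_const δ) ((hd2 n).div_const δ), MeasureTheory.integral_const,
          MeasureTheory.integral_div, smul_eq_mul, mul_comm]
  refine Metric.tendsto_atTop.2 fun η hη => ?_
  obtain ⟨δ, hδ, hμ⟩ : ∃ δ > 0, δ * μ.real univ ≤ η / 2 := by
    have hX : 0 ≤ μ.real univ := measureReal_nonneg
    refine ⟨η / (2 * (μ.real univ + 1)), by positivity, ?_⟩
    rw [div_mul_eq_mul_div, div_le_div_iff₀ (by positivity) two_pos]
    nlinarith
  obtain ⟨N, hN⟩ := Metric.tendsto_atTop.1 h (δ * η / 2) (by positivity)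
  refine ⟨N, fun n hn => ?_⟩
  have hsq : (∫ x, d n x ^ 2 ∂μ) / δ < η / 2 := by
    rw [div_lt_iff₀ hδ]
    linarith [(abs_lt.1 (Real.dist_eq _ _ ▸ sub_zero (∫ x, d n x ^ 2 ∂μ) ▸ hN n hn)).2]
  rw [Real.dist_eq, sub_zero]
  linarith [key δ hδ n]

end Integrals

noncomputable def wellDist (s : ℝ) : ℝ := min |s - 1| |s + 1|

theorem wellDist_nonneg (s : ℝ) : 0 ≤ wellDist s := le_min (abs_nonneg _) (abs_nonneg _)

theorem continuous_wellDist : Continuous wellDist :=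
  (continuous_id.sub continuous_const).abs.min (continuous_id.add continuous_const).abs

theorem wellDist_le {τ : ℝ} (hτ : τ = 1 ∨ τ = -1) (s : ℝ) : wellDist s ≤ |s - τ| := by
  rcases hτ with rfl | rfl
  · exact min_le_left _ _
  · exact (min_le_right _ _).trans_eq (by rw [sub_neg_eq_add])

theorem exists_wellDist_eq (s : ℝ) : ∃ τ, (τ = 1 ∨ τ = -1) ∧ wellDist s = |s - τ| := by
  rcases min_choice |s - 1| |s + 1| with h | h
  · exact ⟨1, .inl rfl, h⟩
  · exact ⟨-1, .inr rfl, by rw [wellDist, h, sub_neg_eq_add]⟩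

theorem wellDist_le_abs_sub_add (y s : ℝ) : wellDist y ≤ |s - y| + wellDist s := by
  obtain ⟨τ, hτ, hs⟩ := exists_wellDist_eq s
  rw [hs, abs_sub_comm s y]
  exact (wellDist_le hτ y).trans (abs_sub_le _ _ _)

theorem eq_one_or_neg_one_of_wellDist_eq_zero {s : ℝ} (h : wellDist s = 0) : s = 1 ∨ s = -1 := by
  obtain ⟨τ, hτ, hs⟩ := exists_wellDist_eq s
  rwa [sub_eq_zero.1 (abs_eq_zero.1 (hs.symm.trans h))]

theorem mul_wellDist_sq_le {W : ℝ → ℝ} {c : ℝ} (hc : 0 ≤ c)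
    (hWgp : ∀ s, 0 ≤ s → c * (s - 1) ^ 2 ≤ W s) (hWgn : ∀ s, s ≤ 0 → c * (s + 1) ^ 2 ≤ W s)
    (s : ℝ) : c * wellDist s ^ 2 ≤ W s := by
  rcases le_total 0 s with hs | hs
  · refine le_trans ?_ (hWgp s hs)
    rw [← sq_abs (s - 1)]
    gcongr
    · exact wellDist_nonneg s
    · exact min_le_left _ _
  · refine le_trans ?_ (hWgn s hs)
    rw [← sq_abs (s + 1)]
    gcongr
    · exact wellDist_nonneg s
    · exact min_le_right _ _

theorem abs_sub_le_wellDist_add {Φ : ℝ → ℝ} {L : ℝ≥0} (hΦ : LipschitzWith L Φ) (hone : Φ 1 = 1)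
    (hneg : Φ (-1) = -1) (s y : ℝ) : |s - y| ≤ (1 + L) * wellDist s + |Φ s - y| := by
  obtain ⟨τ, hτ, hs⟩ := exists_wellDist_eq s
  have hΦτ : Φ τ = τ := by rcases hτ with rfl | rfl <;> assumption
  have hLip : |Φ τ - Φ s| ≤ L * |s - τ| := by
    simpa only [Real.dist_eq, abs_sub_comm s τ] using hΦ.dist_le_mul τ s
  calc |s - y| ≤ |s - τ| + |Φ τ - y| := by rw [hΦτ]; exact abs_sub_le _ _ _
    _ ≤ |s - τ| + (|Φ τ - Φ s| + |Φ s - y|) := by gcongr; exact abs_sub_le _ _ _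
    _ ≤ (1 + L) * wellDist s + |Φ s - y| := by rw [hs]; linarith

section WellLimits

variable {α : Type*} [MeasurableSpace α] {μ : Measure α} [IsFiniteMeasure μ]

theorem MeasureTheory.Integrable.wellDist_comp {f : α → ℝ} (hf : Integrable f μ) :
    Integrable (fun x => wellDist (f x)) μ :=
  (hf.abs.add (integrable_const 1)).mono'
    (continuous_wellDist.comp_aestronglyMeasurable hf.aestronglyMeasurable) (.of_forall fun x => by
      rw [Real.norm_of_nonneg (wellDist_nonneg _)]
      show wellDist (f x) ≤ |f x| + 1
      exact (min_le_left _ _).trans ((abs_sub _ _).trans_eq (by rw [abs_one])))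

theorem tendsto_integral_abs_sub_of_tendsto_wellDist {Φ : ℝ → ℝ} {L : ℝ≥0}
    (hΦ : LipschitzWith L Φ) (hone : Φ 1 = 1) (hneg : Φ (-1) = -1) {u : ℕ → α → ℝ} {w : α → ℝ}
    (hu : ∀ m, Integrable (u m) μ) (hΦu : ∀ m, Integrable (fun x => Φ (u m x)) μ)
    (hw : Integrable w μ) (hd : Tendsto (fun m => ∫ x, wellDist (u m x) ∂μ) atTop (𝓝 0))
    (hΦw : Tendsto (fun m => ∫ x, |Φ (u m x) - w x| ∂μ) atTop (𝓝 0)) :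
    Tendsto (fun m => ∫ x, |u m x - w x| ∂μ) atTop (𝓝 0) := by
  refine squeeze_zero (fun m => integral_nonneg fun x => abs_nonneg _) (fun m => ?_)
    (by simpa using (hd.const_mul (1 + L : ℝ)).add hΦw)
  have hd' := (hu m).wellDist_comp.const_mul (1 + L : ℝ)
  have hΦw' : Integrable (fun x => |Φ (u m x) - w x|) μ := ((hΦu m).sub hw).abs
  rw [← MeasureTheory.integral_const_mul, ← MeasureTheory.integral_add hd' hΦw']
  exact integral_mono_of_nonneg (.of_forall fun x => abs_nonneg _) (hd'.add hΦw')
    (.of_forall fun x => abs_sub_le_wellDist_add hΦ hone hneg _ _)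

theorem ae_eq_one_or_neg_one_of_tendsto {u : ℕ → α → ℝ} {w : α → ℝ}
    (hu : ∀ m, Integrable (u m) μ) (hw : Integrable w μ)
    (hd : Tendsto (fun m => ∫ x, wellDist (u m x) ∂μ) atTop (𝓝 0))
    (huw : Tendsto (fun m => ∫ x, |u m x - w x| ∂μ) atTop (𝓝 0)) :
    ∀ᵐ x ∂μ, w x = 1 ∨ w x = -1 := by
  have hle : ∀ m, ∫ x, wellDist (w x) ∂μ ≤ ∫ x, |u m x - w x| ∂μ + ∫ x, wellDist (u m x) ∂μ :=
    fun m => by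
      have huw' : Integrable (fun x => |u m x - w x|) μ := ((hu m).sub hw).abs
      rw [← MeasureTheory.integral_add huw' (hu m).wellDist_comp]
      exact integral_mono hw.wellDist_comp (huw'.add (hu m).wellDist_comp)
        fun x => wellDist_le_abs_sub_add _ _
  have hzero : ∫ x, wellDist (w x) ∂μ = 0 :=
    le_antisymm (ge_of_tendsto (by simpa using huw.add hd) (.of_forall hle))
      (integral_nonneg fun x => wellDist_nonneg _)
  filter_upwards [(integral_eq_zero_iff_of_nonneg (fun x => wellDist_nonneg _)
    hw.wellDist_comp).1 hzero] with x hx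
  exact eq_one_or_neg_one_of_wellDist_eq_zero hx

end WellLimits

theorem tendsto_integral_wellDist_of_integral_le {W : ℝ → ℝ} {c C a b : ℝ} (hc : 0 < c)
    (hWgp : ∀ s, 0 ≤ s → c * (s - 1) ^ 2 ≤ W s) (hWgn : ∀ s, s ≤ 0 → c * (s + 1) ^ 2 ≤ W s)
    (hW : Continuous W) (hab : a ≤ b) {e : ℕ → ℝ} (he : Tendsto e atTop (𝓝 0))
    {u : ℕ → ℝ → ℝ} (hu : ∀ j, ContinuousOn (u j) (Icc a b))
    (hWu : ∀ j, ∫ x in a..b, W (u j x) ≤ e j * C) :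
    Tendsto (fun j => ∫ x in Ioo a b, wellDist (u j x)) atTop (𝓝 0) := by
  have hint : ∀ {F : ℝ → ℝ}, Continuous F → ∀ j, IntegrableOn (fun x => F (u j x)) (Ioo a b) :=
    fun hF j => (hF.comp_continuousOn (hu j)).integrableOn_Icc.mono_set Ioo_subset_Icc_self
  have hint2 := hint (F := fun s => wellDist s ^ 2) (continuous_wellDist.pow 2)
  refine tendsto_integral_of_tendsto_integral_sq (hint continuous_wellDist) hint2
    (squeeze_zero (fun j => integral_nonneg fun x => by positivity) (fun j => ?_)
      (by simpa using (he.mul_const C).div_const c))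
  calc ∫ x in Ioo a b, wellDist (u j x) ^ 2 ≤ ∫ x in Ioo a b, W (u j x) / c :=
        MeasureTheory.integral_mono (hint2 j) ((hint hW j).div_const c) fun x =>
          (le_div_iff₀' hc).2 (mul_wellDist_sq_le hc.le hWgp hWgn _)
    _ ≤ e j * C / c := by
        rw [MeasureTheory.integral_div, ← integral_Ioc_eq_integral_Ioo, ← integral_of_le hab]
        gcongr
        exact hWu j

-- The cut-off `1 - |t|` makes `wellProfile W` constant, hence bounded, outside `[-1, 1]`.
noncomputable def wellDensity (W : ℝ → ℝ) (t : ℝ) : ℝ := min √(W t) (max 0 (1 - |t|))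

noncomputable def wellProfile (W : ℝ → ℝ) (s : ℝ) : ℝ :=
  2 * (∫ t in (-1)..s, wellDensity W t) / (∫ t in (-1)..1, wellDensity W t) - 1

section WellProfile

variable {W : ℝ → ℝ}

theorem continuous_wellDensity (hW : Continuous W) : Continuous (wellDensity W) :=
  hW.sqrt.min (continuous_const.max (continuous_const.sub continuous_abs))

theorem wellDensity_nonneg (t : ℝ) : 0 ≤ wellDensity W t :=
  le_min (Real.sqrt_nonneg _) (le_max_left _ _)

theorem wellDensity_le_sqrt (t : ℝ) : wellDensity W t ≤ √(W t) := min_le_left _ _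

theorem wellDensity_le_one (t : ℝ) : wellDensity W t ≤ 1 :=
  (min_le_right _ _).trans (max_le zero_le_one (by linarith [abs_nonneg t]))

theorem wellDensity_eq_zero {t : ℝ} (ht : 1 ≤ |t|) : wellDensity W t = 0 :=
  ((min_le_right _ _).trans (max_le le_rfl (by linarith))).antisymm (wellDensity_nonneg t)

theorem wellDensity_pos {t : ℝ} (hWt : 0 < W t) (ht : |t| < 1) : 0 < wellDensity W t :=
  lt_min (Real.sqrt_pos.2 hWt) (lt_max_of_lt_right (by linarith))

theorem integral_wellDensity_nonpos {a : ℝ} (ha : 1 ≤ a) (b : ℝ) :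
    ∫ t in a..b, wellDensity W t ≤ 0 := by
  rcases le_total a b with hab | hba
  · rw [integral_congr fun t ht => wellDensity_eq_zero (W := W) ?_, intervalIntegral.integral_zero]
    rw [uIcc_of_le hab] at ht
    exact ha.trans (ht.1.trans (le_abs_self t))
  · rw [integral_symm, neg_nonpos]
    exact integral_nonneg hba fun t _ => wellDensity_nonneg t

theorem integral_wellDensity_nonneg {a : ℝ} (ha : a ≤ -1) (b : ℝ) :
    0 ≤ ∫ t in a..b, wellDensity W t := by
  rcases le_total a b with hab | hba
  · exact integral_nonneg hab fun t _ => wellDensity_nonneg t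
  · rw [integral_congr fun t ht => wellDensity_eq_zero (W := W) ?_, intervalIntegral.integral_zero]
    rw [uIcc_of_ge hba] at ht
    exact (le_neg.1 (ht.2.trans ha)).trans (neg_le_abs t)

theorem integral_wellDensity_pos (hWc : Continuous W) (hWpos : ∀ t, |t| < 1 → 0 < W t) :
    0 < ∫ t in (-1)..1, wellDensity W t :=
  intervalIntegral_pos_of_pos_on ((continuous_wellDensity hWc).intervalIntegrable _ _)
    (fun t ht => wellDensity_pos (hWpos t (abs_lt.2 ht)) (abs_lt.2 ht)) (by norm_num)

theorem hasDerivAt_wellProfile (hWc : Continuous W) (s : ℝ) :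
    HasDerivAt (wellProfile W)
      (2 * wellDensity W s / ∫ t in (-1)..1, wellDensity W t) s :=
  ((((continuous_wellDensity hWc).integral_hasStrictDerivAt (-1) s).hasDerivAt.const_mul
    2).div_const _).sub_const 1

theorem wellProfile_sub (hWc : Continuous W) (s r : ℝ) :
    wellProfile W s - wellProfile W r =
      2 * (∫ t in r..s, wellDensity W t) / ∫ t in (-1)..1, wellDensity W t := by
  have hint := (continuous_wellDensity hWc).intervalIntegrable (μ := volume)
  rw [wellProfile, wellProfile, ← integral_interval_sub_left (hint (-1) s) (hint (-1) r)]
  ring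

theorem lipschitzWith_wellProfile (hWc : Continuous W) (hWpos : ∀ t, |t| < 1 → 0 < W t) :
    LipschitzWith (2 / ∫ t in (-1)..1, wellDensity W t).toNNReal (wellProfile W) := by
  have hZ := integral_wellDensity_pos hWc hWpos
  refine LipschitzWith.of_dist_le_mul fun s r => ?_
  rw [Real.coe_toNNReal _ (by positivity), Real.dist_eq, Real.dist_eq, wellProfile_sub hWc,
    abs_div, abs_mul, abs_two, abs_of_pos hZ, div_mul_eq_mul_div]
  gcongr 2 * ?_ / _
  simpa using norm_integral_le_of_norm_le_const (C := 1) (a := r) (b := s) (f := wellDensity W)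
    fun t _ => by rw [Real.norm_of_nonneg (wellDensity_nonneg t)]; exact wellDensity_le_one t

theorem wellProfile_neg_one : wellProfile W (-1) = -1 := by
  simp [wellProfile]

theorem wellProfile_one (hWc : Continuous W) (hWpos : ∀ t, |t| < 1 → 0 < W t) :
    wellProfile W 1 = 1 := by
  rw [wellProfile, mul_div_assoc, div_self (integral_wellDensity_pos hWc hWpos).ne']
  norm_num

theorem abs_wellProfile_le_one (hWc : Continuous W) (hWpos : ∀ t, |t| < 1 → 0 < W t) (s : ℝ) :
    |wellProfile W s| ≤ 1 := by
  have hZ := integral_wellDensity_pos hWc hWpos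
  refine abs_le.2 ⟨?_, ?_⟩
  · have := wellProfile_sub hWc s (-1)
    rw [wellProfile_neg_one] at this
    have : 0 ≤ 2 * (∫ t in (-1)..s, wellDensity W t) / ∫ t in (-1)..1, wellDensity W t :=
      div_nonneg (mul_nonneg zero_le_two (integral_wellDensity_nonneg le_rfl s)) hZ.le
    linarith
  · have := wellProfile_sub hWc s 1
    rw [wellProfile_one hWc hWpos] at this
    have : 2 * (∫ t in 1..s, wellDensity W t) / (∫ t in (-1)..1, wellDensity W t) ≤ 0 :=
      div_nonpos_of_nonpos_of_nonneg (mul_nonpos_of_nonneg_of_nonpos zero_le_two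
        (integral_wellDensity_nonpos le_rfl s)) hZ.le
    linarith

end WellProfile

theorem exists_wellProfile {W : ℝ → ℝ} (hWc : Continuous W) (hWpos : ∀ t, |t| < 1 → 0 < W t) :
    ∃ (Φ φ : ℝ → ℝ) (L : ℝ≥0), (∀ s, HasDerivAt Φ (φ s) s) ∧ Continuous φ ∧
      (∀ s, |φ s| ≤ L * √(W s)) ∧ LipschitzWith L Φ ∧ Φ 1 = 1 ∧ Φ (-1) = -1 ∧
      ∀ s, |Φ s| ≤ 1 := by
  have hZ := integral_wellDensity_pos hWc hWpos
  refine ⟨wellProfile W, fun s => 2 * wellDensity W s / ∫ t in (-1)..1, wellDensity W t,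
    (2 / ∫ t in (-1)..1, wellDensity W t).toNNReal, hasDerivAt_wellProfile hWc,
    ((continuous_wellDensity hWc).const_mul 2).div_const _, fun s => ?_,
    lipschitzWith_wellProfile hWc hWpos, wellProfile_one hWc hWpos, wellProfile_neg_one,
    abs_wellProfile_le_one hWc hWpos⟩
  show |2 * wellDensity W s / _| ≤ _
  rw [Real.coe_toNNReal _ (by positivity), abs_of_nonneg (div_nonneg
    (mul_nonneg zero_le_two (wellDensity_nonneg s)) hZ.le), mul_div_right_comm]
  exact mul_le_mul_of_nonneg_left (wellDensity_le_sqrt s) (by positivity)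

theorem exists_subseq_tendsto_of_modicaMortolaEnergy_le {W : ℝ → ℝ} {c k a b C : ℝ}
    (hW0 : ∀ s, 0 ≤ W s) (hW : Continuous W) (hWpos : ∀ t, |t| < 1 → 0 < W t) (hc : 0 < c)
    (hWgp : ∀ s, 0 ≤ s → c * (s - 1) ^ 2 ≤ W s) (hWgn : ∀ s, s ≤ 0 → c * (s + 1) ^ 2 ≤ W s)
    (hk : 0 < k) (hab : a < b) {e : ℕ → ℝ} (he : ∀ j, 0 < e j)
    (helim : Tendsto e atTop (𝓝 0)) {u u' u'' : ℕ → ℝ → ℝ}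
    (hu : ∀ j, W22On (u j) (u' j) (u'' j) a b)
    (hC : ∀ j, modicaMortolaEnergy W k (e j) (u j) (u' j) a b ≤ C) :
    ∃ φ : ℕ → ℕ, StrictMono φ ∧ ∃ v : ℝ → ℝ, BoundedVariationOn v (Ioo a b) ∧
      (∀ᵐ x ∂(volume.restrict (Ioo a b)), v x = 1 ∨ v x = -1) ∧
      Tendsto (fun m => ∫ x in a..b, |u (φ m) x - v x|) atTop (𝓝 0) := by
  obtain ⟨Φ, φ, L, hΦ, hφ, hφW, hΦL, hone, hneg, hΦbd⟩ := exists_wellProfile hW hWpos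
  have hint : ∀ {F : ℝ → ℝ}, Continuous F → ∀ j, IntegrableOn (fun x => F (u j x)) (Ioo a b) :=
    fun hF j => (hF.comp_continuousOn (hu j).continuousOn).integrableOn_Icc.mono_set
      Ioo_subset_Icc_self
  have huint : ∀ j, IntegrableOn (u j) (Ioo a b) := fun j =>
    (hu j).continuousOn.integrableOn_Icc.mono_set Ioo_subset_Icc_self
  have hvar : ∀ j, eVariationOn (Φ ∘ u j) (Ioo a b) ≤ (L / (2 * √k) * C).toNNReal := fun j =>
    (eVariationOn.mono _ Ioo_subset_Icc_self).trans <|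
      (eVariationOn_comp_le_modicaMortolaEnergy hW0 hW hΦ hφ hφW hk (he j) hab.le (hu j)).trans
        (ENNReal.ofReal_le_ofReal (by gcongr; exact hC j))
  obtain ⟨ψ, hψ, v, hvBV, hΦv⟩ :=
    exists_subseq_ae_tendsto_of_eVariationOn_le hab _ hvar fun j x _ => hΦbd (u j x)
  have hΦbd' : ∀ m, ∀ᵐ x ∂(volume.restrict (Ioo a b)), |Φ (u (ψ m) x)| ≤ 1 :=
    fun m => .of_forall fun x => hΦbd _
  have hv : Integrable v (volume.restrict (Ioo a b)) :=
    .of_bound (aestronglyMeasurable_of_tendsto_ae atTop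
      (fun m => (hint hΦL.continuous _).aestronglyMeasurable) hΦv) 1
      (ae_abs_le_of_ae_tendsto hΦbd' hΦv)
  have hdist := tendsto_integral_wellDist_of_integral_le hc hWgp hWgn hW hab.le
    (helim.comp hψ.tendsto_atTop) (fun m => (hu (ψ m)).continuousOn) fun m =>
      (integral_comp_le_mul_modicaMortolaEnergy hW hk.le (he _) (hu _) hab.le).trans
        (mul_le_mul_of_nonneg_left (hC _) (he _).le)
  have hconv := tendsto_integral_abs_sub_of_tendsto_wellDist hΦL hone hneg
    (fun m => huint (ψ m)) (fun m => hint hΦL.continuous (ψ m)) hv hdist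
    (tendsto_integral_abs_sub_of_ae_tendsto (fun m => (hint hΦL.continuous _).aestronglyMeasurable)
      hΦbd' hΦv)
  refine ⟨ψ, hψ, v, hvBV, ae_eq_one_or_neg_one_of_tendsto (fun m => huint (ψ m)) hv
    hdist hconv, ?_⟩
  simpa only [integral_of_le hab.le, integral_Ioc_eq_integral_Ioo] using hconv

theorem compactness_Fk_general
    (W : ℝ → ℝ) (hWcont : Continuous W) (hWnonneg : ∀ s, 0 ≤ W s)
    (hWzero : ∀ s, W s = 0 ↔ s = 1 ∨ s = -1)
    (c : ℝ) (hc : 0 < c)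
    (hWgp : ∀ s, 0 ≤ s → c * (s - 1) ^ 2 ≤ W s)
    (hWgn : ∀ s, s ≤ 0 → c * (s + 1) ^ 2 ≤ W s)
    (k₀ : ℝ)
    (hk₀ : ∀ a b : ℝ, a < b → ∀ u u' u'' : ℝ → ℝ, W22On u u' u'' a b →
      k₀ * ∫ x in a..b, (u' x) ^ 2 ≤
        ((b - a) ^ 2)⁻¹ * (∫ x in a..b, W (u x)) +
          (b - a) ^ 2 * ∫ x in a..b, (u'' x) ^ 2)
    (k : ℝ) (hkpos : 0 < k) (hk : k < k₀)
    (α β : ℝ) (hαβ : α < β)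
    (ε : ℕ → ℝ) (hεpos : ∀ j, 0 < ε j) (hεlim : Tendsto ε atTop (nhds 0))
    (u u' u'' : ℕ → ℝ → ℝ) (hu : ∀ j, W22On (u j) (u' j) (u'' j) α β)
    (M : ℝ)
    (hM : ∀ j, (∫ x in α..β,
        (W (u j x) / ε j - k * ε j * (u' j x) ^ 2 + (ε j) ^ 3 * (u'' j x) ^ 2)) ≤ M) :
    ∃ φ : ℕ → ℕ, StrictMono φ ∧
      ∃ v : ℝ → ℝ, BoundedVariationOn v (Set.Ioo α β) ∧
        (∀ᵐ x ∂(MeasureTheory.volume.restrict (Set.Ioo α β)), v x = 1 ∨ v x = -1) ∧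
        Tendsto (fun m => ∫ x in α..β, |u (φ m) x - v x|) atTop (nhds 0) := by
  have hWpos : ∀ t, |t| < 1 → 0 < W t := fun t ht => (hWnonneg t).lt_of_ne fun h => by
    rcases (hWzero t).1 h.symm with rfl | rfl <;> norm_num at ht
  have hε : Tendsto ε atTop (𝓝[>] 0) := tendsto_nhdsWithin_iff.2 ⟨hεlim, .of_forall hεpos⟩
  obtain ⟨N, hN⟩ := eventually_atTop.1
    (hε.eventually (eventually_energy_coercive hWnonneg hWcont hk₀ hkpos hk hαβ))
  have hr : 0 < 1 - k / k₀ := sub_pos.2 ((div_lt_one (hkpos.trans hk)).2 hk)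
  have hbound : ∀ j, modicaMortolaEnergy W k (ε (j + N)) (u (j + N)) (u' (j + N)) α β ≤
      4 * M / (1 - k / k₀) := fun j =>
    (le_div_iff₀' hr).2 <| (hN (j + N) (Nat.le_add_left N j) _ _ _ (hu _)).trans
      (mul_le_mul_of_nonneg_left (hM _) zero_le_four)
  obtain ⟨ψ, hψ, v, hvBV, hv, hconv⟩ := exists_subseq_tendsto_of_modicaMortolaEnergy_le hWnonneg
    hWcont hWpos hc hWgp hWgn hkpos hαβ (fun j => hεpos (j + N))
    (hεlim.comp (tendsto_add_atTop_nat N)) (fun j => hu (j + N)) hbound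
  exact ⟨fun m => ψ m + N, fun m n h => Nat.add_lt_add_right (hψ h) N, v, hvBV, hv, hconv⟩

/-- Compactness: let `0 < k < k₀`, `I = (α,β)`, `ε_j → 0⁺`, and `(u_j) ⊂ W^{2,2}(I)` with
`sup_j F^k_{ε_j}(u_j, I) < +∞`.  Then a subsequence of `(u_j)` converges in `L¹(I)`
to a function `v ∈ BV(I; {−1,1})`. -/
theorem compactness_Fk
    (W : ℝ → ℝ) (hWcont : Continuous W) (hWnonneg : ∀ s, 0 ≤ W s)
    (hWzero : ∀ s, W s = 0 ↔ s = 1 ∨ s = -1)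
    (c : ℝ) (hc : 0 < c)
    (hWgp : ∀ s, 0 ≤ s → c * (s - 1) ^ 2 ≤ W s)
    (hWgn : ∀ s, s ≤ 0 → c * (s + 1) ^ 2 ≤ W s)
    (k₀ : ℝ) (hk₀pos : 0 < k₀)
    (hk₀ : ∀ a b : ℝ, a < b → ∀ u u' u'' : ℝ → ℝ, W22On u u' u'' a b →
      k₀ * ∫ x in a..b, (u' x) ^ 2 ≤
        ((b - a) ^ 2)⁻¹ * (∫ x in a..b, W (u x)) +
          (b - a) ^ 2 * ∫ x in a..b, (u'' x) ^ 2)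
    (k : ℝ) (hkpos : 0 < k) (hk : k < k₀)
    (α β : ℝ) (hαβ : α < β)
    (ε : ℕ → ℝ) (hεpos : ∀ j, 0 < ε j) (hεlim : Tendsto ε atTop (nhds 0))
    (u u' u'' : ℕ → ℝ → ℝ) (hu : ∀ j, W22On (u j) (u' j) (u'' j) α β)
    (M : ℝ)
    (hM : ∀ j, (∫ x in α..β,
        (W (u j x) / ε j - k * ε j * (u' j x) ^ 2 + (ε j) ^ 3 * (u'' j x) ^ 2)) ≤ M) :
    ∃ φ : ℕ → ℕ, StrictMono φ ∧
      ∃ v : ℝ → ℝ, BoundedVariationOn v (Set.Ioo α β) ∧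
        (∀ᵐ x ∂(MeasureTheory.volume.restrict (Set.Ioo α β)), v x = 1 ∨ v x = -1) ∧
        Tendsto (fun m => ∫ x in α..β, |u (φ m) x - v x|) atTop (nhds 0) :=
  compactness_Fk_general W hWcont hWnonneg hWzero c hc hWgp hWgn k₀ hk₀ k hkpos hk α β hαβ ε hεpos
    hεlim u u' u'' hu M hM
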